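/- arXiv:2101.10943 — 2 statements merged into one kernel-verified Lean document; each statement's English description precedes it below -/
import Mathlib

section
/- If π(x) = π̂(x) for all x (correct propensity model), then the DR pseudo-outcome satisfies E[Ỹ_DR | X=x] = τ(x) for all x, regardless of μ̂0, μ̂1. -/
/-!
With the true propensity `p = E[W | X = x]`, each augmentation term `(1 - W / p) * μ̂₁` and
`(1 - (1 - W) / (1 - p)) * μ̂₀` has conditional mean zero whatever the outcome estimate, and the
inverse-propensity-weighted term `(W / p - (1 - W) / (1 - p)) * Y` has conditional mean
`E[W Y] / p - E[(1 - W) Y] / (1 - p) = μ₁ - μ₀`.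
-/

open MeasureTheory

section

variable {Ω : Type*} [MeasurableSpace Ω] {μ : Measure Ω} {W Y : Ω → ℝ}

theorem integral_one_sub [IsProbabilityMeasure μ] (hW : Integrable W μ) :
    ∫ ω, (1 - W ω) ∂μ = 1 - ∫ ω, W ω ∂μ := by
  rw [integral_sub (integrable_const 1) hW, integral_const, probReal_univ, one_smul]

theorem integrable_one_sub_div_mul {f : Ω → ℝ} [IsFiniteMeasure μ] (hf : Integrable f μ)
    (p c : ℝ) : Integrable (fun ω => (1 - f ω / p) * c) μ :=
  ((integrable_const 1).sub (hf.div_const p)).mul_const c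

theorem integral_one_sub_div_mul_eq_zero [IsProbabilityMeasure μ] {f : Ω → ℝ} {p : ℝ}
    (hf : Integrable f μ) (hmean : ∫ ω, f ω ∂μ = p) (hp : p ≠ 0) (c : ℝ) :
    ∫ ω, (1 - f ω / p) * c ∂μ = 0 := by
  rw [integral_mul_const, integral_sub (integrable_const 1) (hf.div_const p), integral_div,
    hmean, div_self hp, integral_const, probReal_univ, one_smul, sub_self, zero_mul]

theorem integrable_one_sub_mul (hY : Integrable Y μ)
    (hWY : Integrable (fun ω => W ω * Y ω) μ) :
    Integrable (fun ω => (1 - W ω) * Y ω) μ := by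
  simpa only [Pi.sub_def, sub_mul, one_mul] using hY.sub hWY

theorem integrable_ipw (hWY : Integrable (fun ω => W ω * Y ω) μ)
    (h1WY : Integrable (fun ω => (1 - W ω) * Y ω) μ) (p q : ℝ) :
    Integrable (fun ω => (W ω / p - (1 - W ω) / q) * Y ω) μ := by
  simpa only [Pi.sub_def, sub_mul, div_mul_eq_mul_div] using
    (hWY.div_const p).sub (h1WY.div_const q)

theorem integral_ipw {p q m₀ m₁ : ℝ} (hWY : Integrable (fun ω => W ω * Y ω) μ)
    (h1WY : Integrable (fun ω => (1 - W ω) * Y ω) μ) (hp : p ≠ 0) (hq : q ≠ 0)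
    (h₁ : ∫ ω, W ω * Y ω ∂μ = p * m₁) (h₀ : ∫ ω, (1 - W ω) * Y ω ∂μ = q * m₀) :
    ∫ ω, (W ω / p - (1 - W ω) / q) * Y ω ∂μ = m₁ - m₀ := by
  calc ∫ ω, (W ω / p - (1 - W ω) / q) * Y ω ∂μ
      = ∫ ω, (W ω * Y ω / p - (1 - W ω) * Y ω / q) ∂μ := by
        congr 1 with ω
        ring
    _ = (∫ ω, W ω * Y ω ∂μ) / p - (∫ ω, (1 - W ω) * Y ω ∂μ) / q := by
        rw [integral_sub (hWY.div_const p) (h1WY.div_const q), integral_div, integral_div]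
    _ = m₁ - m₀ := by
        rw [h₁, h₀, mul_div_cancel_left₀ _ hp, mul_div_cancel_left₀ _ hq]

end

theorem dr_pseudo_outcome_unbiased_of_correct_propensity_general {X Ω : Type*} [MeasurableSpace Ω]
    (κ : X → Measure Ω) (hκ : ∀ x, IsProbabilityMeasure (κ x))
    (W Y : Ω → ℝ) (pi pih mu0 mu1 tau : X → ℝ)
    (hIntW : ∀ x, Integrable W (κ x))
    (hIntY : ∀ x, Integrable Y (κ x))
    (hIntWY : ∀ x, Integrable (fun ω => W ω * Y ω) (κ x))
    (hpi : ∀ x, ∫ ω, W ω ∂(κ x) = pi x)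
    (hY1 : ∀ x, ∫ ω, W ω * Y ω ∂(κ x) = pi x * mu1 x)
    (hY0 : ∀ x, ∫ ω, (1 - W ω) * Y ω ∂(κ x) = (1 - pi x) * mu0 x)
    (htau : ∀ x, tau x = mu1 x - mu0 x)
    (hpih : ∀ x, 0 < pih x ∧ pih x < 1)
    (hcorrect : ∀ x, pih x = pi x) :
    ∀ (mu0h mu1h : X → ℝ) (x : X),
      (∫ ω, ((W ω / pih x - (1 - W ω) / (1 - pih x)) * Y ω
          + (1 - W ω / pih x) * mu1h x
          - (1 - (1 - W ω) / (1 - pih x)) * mu0h x) ∂(κ x)) = tau x := by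
  intro mu0h mu1h x
  have := hκ x
  obtain ⟨hp₀, hp₁⟩ := hpih x
  rw [hcorrect x] at hp₀ hp₁ ⊢
  have hp : pi x ≠ 0 := hp₀.ne'
  have hq : 1 - pi x ≠ 0 := (sub_pos.mpr hp₁).ne'
  have hW₀ : Integrable (fun ω => 1 - W ω) (κ x) := (integrable_const 1).sub (hIntW x)
  have hW₀Y := integrable_one_sub_mul (hIntY x) (hIntWY x)
  have hipw := integrable_ipw (hIntWY x) hW₀Y (pi x) (1 - pi x)
  have hmu1h := integrable_one_sub_div_mul (hIntW x) (pi x) (mu1h x)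
  rw [integral_sub (hipw.fun_add hmu1h) (integrable_one_sub_div_mul hW₀ _ _),
    integral_add hipw hmu1h,
    integral_ipw (hIntWY x) hW₀Y hp hq (hY1 x) (hY0 x),
    integral_one_sub_div_mul_eq_zero (hIntW x) (hpi x) hp,
    integral_one_sub_div_mul_eq_zero hW₀ (by rw [integral_one_sub (hIntW x), hpi x]) hq, htau x]
  ring

/-- Double robustness, propensity half: if the propensity estimate is exact
(`pih = pi`), the DR pseudo-outcome is conditionally unbiased for CATE
regardless of the outcome estimates `mu0h`, `mu1h`. -/
theorem dr_pseudo_outcome_unbiased_of_correct_propensity {X Ω : Type*} [MeasurableSpace Ω]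
    (κ : X → Measure Ω) (hκ : ∀ x, IsProbabilityMeasure (κ x))
    (W Y : Ω → ℝ) (pi pih mu0 mu1 tau : X → ℝ)
    (hW : ∀ ω, W ω = 0 ∨ W ω = 1)
    (hIntW : ∀ x, Integrable W (κ x))
    (hIntY : ∀ x, Integrable Y (κ x))
    (hIntWY : ∀ x, Integrable (fun ω => W ω * Y ω) (κ x))
    (hpi : ∀ x, ∫ ω, W ω ∂(κ x) = pi x)
    (hY1 : ∀ x, ∫ ω, W ω * Y ω ∂(κ x) = pi x * mu1 x)
    (hY0 : ∀ x, ∫ ω, (1 - W ω) * Y ω ∂(κ x) = (1 - pi x) * mu0 x)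
    (htau : ∀ x, tau x = mu1 x - mu0 x)
    (hpih : ∀ x, 0 < pih x ∧ pih x < 1)
    (hcorrect : ∀ x, pih x = pi x) :
    ∀ (mu0h mu1h : X → ℝ) (x : X),
      (∫ ω, ((W ω / pih x - (1 - W ω) / (1 - pih x)) * Y ω
          + (1 - W ω / pih x) * mu1h x
          - (1 - (1 - W ω) / (1 - pih x)) * mu0h x) ∂(κ x)) = tau x :=
  dr_pseudo_outcome_unbiased_of_correct_propensity_general κ hκ W Y pi pih mu0 mu1 tau hIntW hIntY
    hIntWY hpi hY1 hY0 htau hpih hcorrect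
end

section
/- Under overlap π(x) ≥ ω > 0 and 1−π(x) ≥ ω, for any plug-in CATE estimator τ̂ = μ̂1 − μ̂0: E_{X∼P}[(τ̂(X) − τ(X))^2] ≤ (2/ω)(E_{X∼P(·|W=1)}[(μ̂1(X) − μ1(X))^2] + E_{X∼P(·|W=0)}[(μ̂0(X) − μ0(X))^2]). -/
open MeasureTheory

/-- Finite-sample selection-bias bound for plug-in learners: under overlap
`ω ≤ pi x ≤ 1 - ω`, the population squared error of `tauh = mu1h - mu0h` is
bounded by `(2/ω)` times the per-group squared errors. `p`, `p1`, `p0` are the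
marginal and treatment-group-conditional densities of `X` w.r.t. `ν`, related
to the propensity `pi` and `pr = P(W=1)` by Bayes' rule. -/
theorem plugin_selection_bias_bound {X : Type*} [MeasurableSpace X]
    (ν : Measure X) (p p0 p1 pi mu0 mu1 mu0h mu1h tau tauh : X → ℝ)
    (pr ω : ℝ) (hω : 0 < ω) (hpr0 : 0 < pr) (hpr1 : pr < 1)
    (hp : ∀ x, 0 ≤ p x) (hp0 : ∀ x, 0 ≤ p0 x) (hp1 : ∀ x, 0 ≤ p1 x)
    (hoverlap : ∀ x, ω ≤ pi x ∧ pi x ≤ 1 - ω)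
    (hbayes1 : ∀ x, pi x * p x = pr * p1 x)
    (hbayes0 : ∀ x, (1 - pi x) * p x = (1 - pr) * p0 x)
    (htau : ∀ x, tau x = mu1 x - mu0 x)
    (htauh : ∀ x, tauh x = mu1h x - mu0h x)
    (hInt : Integrable (fun x => (tauh x - tau x) ^ 2 * p x) ν)
    (hInt1 : Integrable (fun x => (mu1h x - mu1 x) ^ 2 * p1 x) ν)
    (hInt0 : Integrable (fun x => (mu0h x - mu0 x) ^ 2 * p0 x) ν) :
    ∫ x, (tauh x - tau x) ^ 2 * p x ∂ν
      ≤ (2 / ω) * ((∫ x, (mu1h x - mu1 x) ^ 2 * p1 x ∂ν)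
          + ∫ x, (mu0h x - mu0 x) ^ 2 * p0 x ∂ν) := by
  have key : ∀ x, (tauh x - tau x) ^ 2 * p x
      ≤ (2 / ω) * ((mu1h x - mu1 x) ^ 2 * p1 x + (mu0h x - mu0 x) ^ 2 * p0 x) := by
    intro x
    obtain ⟨h1, h2⟩ := hoverlap x
    have hb1 := hbayes1 x
    have hb0 := hbayes0 x
    have hωp1 : ω * p x ≤ p1 x := by nlinarith [hp x, hp1 x]
    have hωp0 : ω * p x ≤ p0 x := by nlinarith [hp x, hp0 x]
    have hsq : (tauh x - tau x) ^ 2 ≤ 2 * ((mu1h x - mu1 x) ^ 2 + (mu0h x - mu0 x) ^ 2) := by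
      rw [htau x, htauh x]; nlinarith [sq_nonneg (mu1h x - mu1 x + (mu0h x - mu0 x))]
    have h3 : (tauh x - tau x) ^ 2 * (ω * p x)
        ≤ 2 * ((mu1h x - mu1 x) ^ 2 * p1 x + (mu0h x - mu0 x) ^ 2 * p0 x) := by
      have ha := mul_le_mul_of_nonneg_right hsq (mul_nonneg hω.le (hp x))
      have hb := mul_le_mul_of_nonneg_left hωp1 (sq_nonneg (mu1h x - mu1 x))
      have hc := mul_le_mul_of_nonneg_left hωp0 (sq_nonneg (mu0h x - mu0 x))
      nlinarith [ha, hb, hc]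
    rw [div_mul_eq_mul_div, le_div_iff₀ hω]
    nlinarith [h3]
  calc ∫ x, (tauh x - tau x) ^ 2 * p x ∂ν
      ≤ ∫ x, (2 / ω) * ((mu1h x - mu1 x) ^ 2 * p1 x + (mu0h x - mu0 x) ^ 2 * p0 x) ∂ν := by
        exact integral_mono hInt ((hInt1.add hInt0).const_mul _) key
    _ = (2 / ω) * ((∫ x, (mu1h x - mu1 x) ^ 2 * p1 x ∂ν)
          + ∫ x, (mu0h x - mu0 x) ^ 2 * p0 x ∂ν) := by
        rw [integral_const_mul, integral_add hInt1 hInt0]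
end
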